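/- In a finite partial Sherk plane, if ℓ and h are perpendicular lines intersecting at a point P, then the number of poles of ℓ that are incident with h equals the number of polars of P. -/
import Mathlib


structure PartialSherkPlane (Point Line : Type*) where
  Inc : Point → Line → Prop
  Perp : Line → Line → Prop
  aStar : ∀ P Q : Point, P ≠ Q → ∀ l m : Line,
    Inc P l → Inc Q l → Inc P m → Inc Q m → l = m
  b1 : ∀ l m : Line, Perp l m → Perp m l
  b2 : ∀ l m : Line, Perp l m → ∃ P : Point, Inc P l ∧ Inc P m
  b3 : ∀ (P : Point) (l : Line), ∃ m : Line, Inc P m ∧ Perp m l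
  b4 : ∀ (P : Point) (l : Line), Inc P l → ∃! m : Line, Inc P m ∧ Perp m l
  b5 : ∃ x y z : Line, Perp x y ∧ ¬ Perp x z ∧ ¬ Perp y z ∧
    ¬ ∃ P : Point, Inc P x ∧ Inc P y ∧ Inc P z

/-- `P` is a pole of `l`: `P` is not on `l` and at least two distinct
perpendiculars to `l` pass through `P`. -/
def PartialSherkPlane.IsPole {Point Line : Type*} (G : PartialSherkPlane Point Line)
    (P : Point) (l : Line) : Prop :=
  ¬ G.Inc P l ∧ ∃ g h : Line, g ≠ h ∧ G.Inc P g ∧ G.Inc P h ∧ G.Perp g l ∧ G.Perp h l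

/-- No line is perpendicular to itself. -/
lemma PartialSherkPlane.no_self_perp {Point Line : Type*}
    (G : PartialSherkPlane Point Line) (l : Line) : ¬ G.Perp l l := by
  intro hll
  have hperp_eq : ∀ m, G.Perp m l → m = l := by
    intro m hm
    obtain ⟨T, hTm, hTl⟩ := G.b2 m l hm
    obtain ⟨n, _, hun⟩ := G.b4 T l hTl
    rw [hun m ⟨hTm, hm⟩, hun l ⟨hTl, hll⟩]
  have hall : ∀ S : Point, G.Inc S l := by
    intro S
    obtain ⟨m, hSm, hml⟩ := G.b3 S l
    rw [← hperp_eq m hml]; exact hSm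
  obtain ⟨x, y, z, hxy, _, _, hno⟩ := G.b5
  obtain ⟨P, hPx, hPy⟩ := G.b2 x y hxy
  obtain ⟨m, hPm, hmz⟩ := G.b3 P z
  obtain ⟨Q, hQm, hQz⟩ := G.b2 m z hmz
  by_cases hPQ : P = Q
  · exact hno ⟨P, hPx, hPy, hPQ ▸ hQz⟩
  · have hml : m = l := G.aStar P Q hPQ m l hPm hQm (hall P) (hall Q)
    have hmz' : G.Perp l z := hml ▸ hmz
    have hzl : z = l := hperp_eq z (G.b1 l z hmz')
    exact hno ⟨P, hPx, hPy, hzl ▸ hall P⟩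

/-- If `P` is off `l` and has two distinct perpendiculars to `l`, then every line
through `P` is perpendicular to `l`. -/
lemma PartialSherkPlane.alp {Point Line : Type*} [Finite Point]
    (G : PartialSherkPlane Point Line) {l : Line} {P : Point} {a b : Line}
    (hab : a ≠ b) (haP : G.Inc P a) (hbP : G.Inc P b)
    (hal : G.Perp a l) (hbl : G.Perp b l) (hPl : ¬ G.Inc P l)
    {k : Line} (hPk : G.Inc P k) : G.Perp k l := by
  by_contra hkl
  have hlk : ¬ G.Perp l k := fun hh => hkl (G.b1 l k hh)
  obtain ⟨A, hAa, hAl⟩ := G.b2 a l hal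
  obtain ⟨B, hBb, hBl⟩ := G.b2 b l hbl
  have hPA : P ≠ A := fun hh => hPl (hh ▸ hAl)
  have hAB : A ≠ B := by
    intro hh; subst hh
    exact hab (G.aStar P A hPA a b haP hAa hbP hBb)
  set Lp := {F : Point // G.Inc F l} with hLp
  set Kp := {X : Point // G.Inc X k} with hKp
  set D := {p : Point × Point //
    G.Inc p.1 k ∧ G.Inc p.2 l ∧ ∃ n, G.Perp n l ∧ G.Inc p.1 n ∧ G.Inc p.2 n} with hD
  -- map 1 : Lp → Kp
  have h1 : ∀ F : Lp, ∃ (X : Kp) (n : Line), G.Perp n k ∧ G.Inc F.1 n ∧ G.Inc X.1 n := by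
    intro F
    obtain ⟨n, hFn, hnk⟩ := G.b3 F.1 k
    obtain ⟨X, hXn, hXk⟩ := G.b2 n k hnk
    exact ⟨⟨X, hXk⟩, n, hnk, hFn, hXn⟩
  choose m1 n1 hn1k hFn1 hXn1 using h1
  have inj1 : Function.Injective m1 := by
    intro F F' hFF
    have hne : n1 F = n1 F' := by
      obtain ⟨nn, _, hu⟩ := G.b4 (m1 F).1 k (m1 F).2
      rw [hu (n1 F) ⟨hXn1 F, hn1k F⟩, hu (n1 F') ⟨hFF ▸ hXn1 F', hn1k F'⟩]
    by_contra hFF'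
    have hne2 : F.1 ≠ F'.1 := fun hh => hFF' (Subtype.ext hh)
    have heq := G.aStar F.1 F'.1 hne2 (n1 F) l (hFn1 F) (hne ▸ hFn1 F') F.2 F'.2
    exact hlk (heq ▸ hn1k F)
  -- map 3 : D → Lp
  have inj3 : Function.Injective (fun d : D => (⟨d.1.2, d.2.2.1⟩ : Lp)) := by
    intro d d' hdd
    obtain ⟨hk1, hl1, n, hnl, h1n, h2n⟩ := d.2
    obtain ⟨hk1', hl1', n', hnl', h1n', h2n'⟩ := d'.2
    have hF : d.1.2 = d'.1.2 := congrArg Subtype.val hdd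
    have hnn : n = n' := by
      obtain ⟨nn, _, hu⟩ := G.b4 d.1.2 l hl1
      rw [hu n ⟨h2n, hnl⟩, hu n' ⟨hF ▸ h2n', hnl'⟩]
    have hXX : d.1.1 = d'.1.1 := by
      by_contra hx
      have heq := G.aStar d.1.1 d'.1.1 hx n k h1n (hnn ▸ h1n') hk1 hk1'
      exact hkl (heq ▸ hnl)
    exact Subtype.ext (Prod.ext hXX hF)
  -- map 2 : Kp ⊕ PUnit → D
  have h2 : ∀ X : Kp, ∃ d : D, d.1.1 = X.1 ∧ (X.1 = P → d.1.2 = A) := by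
    intro X
    by_cases hXP : X.1 = P
    · exact ⟨⟨(P, A), hPk, hAl, a, hal, haP, hAa⟩, hXP.symm, fun _ => rfl⟩
    · obtain ⟨p, hXp, hpl⟩ := G.b3 X.1 l
      obtain ⟨F, hFp, hFl⟩ := G.b2 p l hpl
      exact ⟨⟨(X.1, F), X.2, hFl, p, hpl, hXp, hFp⟩, rfl, fun hh => absurd hh hXP⟩
  choose g hg1 hg2 using h2
  have inj2 : Function.Injective
      (Sum.elim g (fun _ : Unit => (⟨(P, B), hPk, hBl, b, hbl, hbP, hBb⟩ : D))) := by
    rintro (X | u) (X' | u') hff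
    · simp only [Sum.elim_inl] at hff
      have : X.1 = X'.1 := by rw [← hg1 X, ← hg1 X', hff]
      exact congrArg Sum.inl (Subtype.ext this)
    · simp only [Sum.elim_inl, Sum.elim_inr] at hff
      exfalso
      have hXP : X.1 = P := by have hh := hg1 X; rw [hff] at hh; exact hh.symm
      have hA := hg2 X hXP
      rw [hff] at hA
      exact hAB hA.symm
    · simp only [Sum.elim_inl, Sum.elim_inr] at hff
      exfalso
      have hXP : X'.1 = P := by have hh := hg1 X'; rw [← hff] at hh; exact hh.symm
      have hA := hg2 X' hXP
      rw [← hff] at hA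
      exact hAB hA.symm
    · exact congrArg Sum.inr rfl
  have c1 : Nat.card Lp ≤ Nat.card Kp := Nat.card_le_card_of_injective m1 inj1
  have c3 : Nat.card D ≤ Nat.card Lp := Nat.card_le_card_of_injective _ inj3
  have c2 : Nat.card Kp + 1 ≤ Nat.card D := by
    have hc := Nat.card_le_card_of_injective _ inj2
    simpa [Nat.card_sum] using hc
  omega

theorem stmt_9 {Point Line : Type*} [Fintype Point] [Fintype Line]
    (G : PartialSherkPlane Point Line) {l h : Line} {P : Point}
    (hperp : G.Perp l h) (hPl : G.Inc P l) (hPh : G.Inc P h) :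
    Nat.card {Q : Point // G.IsPole Q l ∧ G.Inc Q h} =
      Nat.card {m : Line // G.IsPole P m} := by
  classical
  have hlh : l ≠ h := fun e => G.no_self_perp h (e ▸ hperp)
  have hhl : G.Perp h l := G.b1 l h hperp
  have key : ∀ Q : {Q : Point // G.IsPole Q l ∧ G.Inc Q h},
      ∃ m : Line, G.Inc Q.1 m ∧ G.Perp m h ∧ G.IsPole P m := by
    rintro ⟨Q, ⟨hQl, g, g', hgg, hQg, hQg', hgl, hg'l⟩, hQh⟩
    obtain ⟨m, ⟨hQm, hmh⟩, _⟩ := G.b4 Q h hQh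
    have hPQ : P ≠ Q := fun e => hQl (e ▸ hPl)
    have hml : G.Perp m l := G.alp hgg hQg hQg' hgl hg'l hQl hQm
    have hPm : ¬ G.Inc P m := by
      intro hPm
      have heq := G.aStar P Q hPQ m h hPm hQm hPh hQh
      exact G.no_self_perp h (heq ▸ hmh)
    exact ⟨m, hQm, hmh, hPm, l, h, hlh, hPl, hPh, G.b1 m l hml, G.b1 m h hmh⟩
  choose φ hφ1 hφ2 hφ3 using key
  apply Nat.card_eq_of_bijective (fun Q => (⟨φ Q, hφ3 Q⟩ : {m : Line // G.IsPole P m}))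
  constructor
  · intro Q Q' hQQ
    have hm : φ Q = φ Q' := congrArg Subtype.val hQQ
    by_contra hne
    have hne2 : Q.1 ≠ Q'.1 := fun hh => hne (Subtype.ext hh)
    have heq := G.aStar Q.1 Q'.1 hne2 (φ Q) h (hφ1 Q) (hm ▸ hφ1 Q') Q.2.2 Q'.2.2
    exact G.no_self_perp h (heq ▸ hφ2 Q)
  · rintro ⟨m, hPm, g, g', hgg, hPg, hPg', hgm, hg'm⟩
    have hhm : G.Perp h m := G.alp hgg hPg hPg' hgm hg'm hPm hPh
    have hlm : G.Perp l m := G.alp hgg hPg hPg' hgm hg'm hPm hPl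
    obtain ⟨Q, hQh, hQm⟩ := G.b2 h m hhm
    have hPQ : P ≠ Q := fun e => hPm (e ▸ hQm)
    have hQl : ¬ G.Inc Q l := fun hQl =>
      hlh (G.aStar P Q hPQ l h hPl hQl hPh hQh)
    have hhm' : h ≠ m := fun e => G.no_self_perp m (e ▸ hhm)
    have hpole : G.IsPole Q l := ⟨hQl, h, m, hhm', hQh, hQm, hhl, G.b1 l m hlm⟩
    refine ⟨⟨Q, hpole, hQh⟩, ?_⟩
    apply Subtype.ext
    obtain ⟨n, _, hu⟩ := G.b4 Q h hQh
    show φ ⟨Q, hpole, hQh⟩ = m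
    rw [hu (φ ⟨Q, hpole, hQh⟩) ⟨hφ1 ⟨Q, hpole, hQh⟩, hφ2 ⟨Q, hpole, hQh⟩⟩, hu m ⟨hQm, G.b1 h m hhm⟩]
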